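/- For every strict partition λ, D(1/H_λ) = 0; that is, Σ_{λ⁺: ℓ(λ⁺)>ℓ(λ)} 1/H_{λ⁺} + 2 Σ_{λ⁺: ℓ(λ⁺)=ℓ(λ)} 1/H_{λ⁺} = 1/H_λ, where λ⁺ ranges over strict partitions obtained from λ by adding one box. -/

import Mathlib

/-!
By the shifted hook length formula `H_λ = ∏ᵢ λᵢ! ∏_{i<k} (λᵢ + λₖ)/(λᵢ - λₖ)`, adding a box to
row `r` (with `λ_{ℓ+1} = 0` for a new row) multiplies `H_λ` by
`(λᵣ + 1) ∏_{j ≠ r} g(λᵣ + 1, λⱼ)/g(λᵣ, λⱼ)`, where `g(x, y) = (x + y)/(x - y)`.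
Since `(C(x + 1, 2) - C(y, 2)) / (C(x + 1, 2) - C(y + 1, 2)) = g(x, y)/g(x + 1, y)`, the ratio
`H_λ / H_{λ+□ᵣ}`, doubled when `r ≤ ℓ`, is the `r`-th term of Lagrange's formula
`∑ᵣ P(vᵣ)/∏_{j ≠ r}(vᵣ - vⱼ) = 1` for the monic `P = ∏_{j ≤ ℓ} (X - C(λⱼ, 2))` of degree `ℓ`
at the `ℓ + 1` nodes `vᵣ = C(λᵣ + 1, 2)`. The terms of the rows where no box can be added vanish,
as then `vᵣ = C(λ_{r-1}, 2)` is a root of `P`.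
-/

open scoped BigOperators

/-- A strict partition: a strictly decreasing list of positive integers. -/
structure StrictPartition where
  parts : List ℕ
  pos : ∀ p ∈ parts, 0 < p
  sorted : parts.Pairwise (· > ·)

namespace StrictPartition

/-- The `i`-th part (1-indexed); `0` for `i` beyond the length. -/
def part (lam : StrictPartition) (i : ℕ) : ℕ := lam.parts.getD (i - 1) 0

/-- The size `|λ|` of a strict partition. -/
def size (lam : StrictPartition) : ℕ := lam.parts.sum

/-- The length `ℓ(λ)` (number of parts) of a strict partition. -/
def length (lam : StrictPartition) : ℕ := lam.parts.length

/-- The cells of the shifted Young diagram: row `i` occupies columns `i+1, …, i+λᵢ`. -/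
def cells (lam : StrictPartition) : Finset (ℕ × ℕ) :=
  (Finset.range (lam.size + lam.length + 2) ×ˢ
      Finset.range (lam.size + lam.length + 2)).filter
    (fun b => 1 ≤ b.1 ∧ b.1 < b.2 ∧ b.2 ≤ b.1 + lam.part b.1)

/-- The content of a box `(i,j)` is `j - i`. -/
def content (b : ℕ × ℕ) : ℕ := b.2 - b.1

/-- The hook length of a box `(i,j)`: the number of boxes strictly below it in its
column, plus the number strictly to its right in its row, plus `1`, plus `λ_j`. -/
def hook (lam : StrictPartition) (b : ℕ × ℕ) : ℕ :=
  (lam.cells.filter (fun b' => b'.2 = b.2 ∧ b.1 < b'.1)).card +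
  (lam.cells.filter (fun b' => b'.1 = b.1 ∧ b.2 < b'.2)).card + 1 + lam.part b.2

/-- `H_λ`, the product of the hook lengths of all boxes of `λ`. -/
def H (lam : StrictPartition) : ℕ := ∏ b ∈ lam.cells, lam.hook b

/-- `μ ≤ λ` iff `μᵢ ≤ λᵢ` for all `i`. -/
instance : LE StrictPartition := ⟨fun mu lam => ∀ i, mu.part i ≤ lam.part i⟩

/-- The cells of the skew shifted diagram `λ/μ`. -/
def skewCells (mu lam : StrictPartition) : Finset (ℕ × ℕ) := lam.cells \ mu.cells

/-- `f_{λ/μ}`: the number of standard shifted Young tableaux of skew shape `λ/μ`,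
i.e. bijective fillings of the cells of `λ/μ` with `0, 1, …, n-1` increasing along
rows and columns. -/
noncomputable def fskew (mu lam : StrictPartition) : ℕ :=
  Nat.card {T : {b // b ∈ skewCells mu lam} → Fin (skewCells mu lam).card //
    Function.Bijective T ∧
    (∀ a b : {b // b ∈ skewCells mu lam},
      (a : ℕ × ℕ).1 = (b : ℕ × ℕ).1 → (a : ℕ × ℕ).2 < (b : ℕ × ℕ).2 → T a < T b) ∧
    (∀ a b : {b // b ∈ skewCells mu lam},
      (a : ℕ × ℕ).2 = (b : ℕ × ℕ).2 → (a : ℕ × ℕ).1 < (b : ℕ × ℕ).1 → T a < T b)}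

/-- The empty strict partition. -/
def empty : StrictPartition := ⟨[], by simp, List.Pairwise.nil⟩

/-- `f_λ`: the number of standard shifted Young tableaux of shape `λ`. -/
noncomputable def f (lam : StrictPartition) : ℕ := fskew empty lam

/-- `f'_{λ/μ} = 2^{|λ|-|μ|-ℓ(λ)+ℓ(μ)} f_{λ/μ}`. -/
noncomputable def fPrime (mu lam : StrictPartition) : ℚ :=
  (2 : ℚ) ^ ((lam.size : ℤ) - mu.size - lam.length + mu.length) * fskew mu lam

/-- `λ⁺` is obtained from `λ` by adding one box. -/
def AddBox (lam lam' : StrictPartition) : Prop := lam ≤ lam' ∧ lam'.size = lam.size + 1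

/-- The difference operator `D` for strict partitions. -/
noncomputable def D (g : StrictPartition → ℚ) (lam : StrictPartition) : ℚ :=
  (∑ᶠ nu ∈ {nu : StrictPartition | lam.AddBox nu ∧ lam.length < nu.length}, g nu) +
  2 * (∑ᶠ nu ∈ {nu : StrictPartition | lam.AddBox nu ∧ nu.length = lam.length}, g nu) -
  g lam

/-- The boxes that can be removed from `λ` leaving (the diagram of) a strict
partition: the outer corners. -/
def removableCells (lam : StrictPartition) : Set (ℕ × ℕ) :=
  {b | b ∈ lam.cells ∧ ∃ mu : StrictPartition, mu.cells = lam.cells.erase b}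

/-- The boxes that can be added to `λ` giving (the diagram of) a strict partition. -/
def addableCells (lam : StrictPartition) : Set (ℕ × ℕ) :=
  {b | b ∉ lam.cells ∧ ∃ mu : StrictPartition, mu.cells = insert b lam.cells}

/-- The contents `x_0 = 1 < x_1 < ⋯ < x_m` of the inner corners of `λ`. -/
def innerContents (lam : StrictPartition) : Set ℕ :=
  insert 1 (content '' lam.addableCells)

/-- The contents `y_1 < ⋯ < y_m` of the outer corners of `λ`. -/
def outerContents (lam : StrictPartition) : Set ℕ :=
  content '' lam.removableCells

/-- `q_k(λ) = ∑_{i=0}^m C(xᵢ,2)^k − ∑_{i=1}^m C(yᵢ,2)^k`. -/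
noncomputable def q (k : ℕ) (lam : StrictPartition) : ℚ :=
  (∑ᶠ c ∈ lam.innerContents, ((c.choose 2 : ℚ)) ^ k) -
  (∑ᶠ c ∈ lam.outerContents, ((c.choose 2 : ℚ)) ^ k)

/-- `q_ν(λ) = ∏_j q_{ν_j}(λ)` for a partition `ν` given as a multiset of parts. -/
noncomputable def qPart (nu : Multiset ℕ) (lam : StrictPartition) : ℚ :=
  (nu.map (fun k => q k lam)).prod

end StrictPartition

open Finset Function

lemma List.sum_range_getD {M : Type*} [AddCommMonoid M] (l : List M) {L : ℕ} (hL : l.length ≤ L) :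
    ∑ i ∈ Finset.range L, l.getD i 0 = l.sum := by
  induction l generalizing L with
  | nil => simp
  | cons a t ih =>
    obtain ⟨N, rfl⟩ : ∃ N, L = N + 1 := ⟨L - 1, by simp at hL; omega⟩
    rw [Finset.sum_range_succ', List.sum_cons, add_comm]
    simp only [List.getD_cons_succ, List.getD_cons_zero]
    rw [ih (by simpa using hL)]

lemma Finset.prod_Icc_erase {M : Type*} [CommMonoid M] (f : ℕ → M) {L r : ℕ} (hr : r ∈ Icc 1 L) :
    ∏ j ∈ (Icc 1 L).erase r, f j = (∏ j ∈ Ico 1 r, f j) * ∏ j ∈ Ioc r L, f j := by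
  rw [← prod_union (disjoint_left.mpr fun x hx hy => by simp at hx hy; omega)]
  congr 1
  ext x
  simp only [mem_erase, mem_Icc, mem_union, mem_Ico, mem_Ioc] at hr ⊢
  omega

lemma Finset.prod_Icc_Ioc_eq {M : Type*} [CommMonoid M] (f : ℕ → ℕ → M) {L r : ℕ}
    (hr : r ∈ Icc 1 L) :
    ∏ i ∈ Icc 1 L, ∏ k ∈ Ioc i L, f i k =
      (∏ k ∈ Ioc r L, f r k) * (∏ i ∈ Ico 1 r, f i r) *
        ∏ i ∈ (Icc 1 L).erase r, ∏ k ∈ (Ioc i L).erase r, f i k := by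
  have hsplit : ∀ i ∈ (Icc 1 L).erase r, ∏ k ∈ Ioc i L, f i k =
      (if i < r then f i r else 1) * ∏ k ∈ (Ioc i L).erase r, f i k := by
    intro i hi
    simp only [mem_erase, mem_Icc] at hi hr
    split_ifs with h
    · exact (mul_prod_erase _ _ (mem_Ioc.mpr ⟨h, hr.2⟩)).symm
    · rw [one_mul, erase_eq_of_notMem (by simp; omega)]
  have hlow : ∏ i ∈ (Icc 1 L).erase r, (if i < r then f i r else 1) = ∏ i ∈ Ico 1 r, f i r := by
    rw [← prod_filter]
    congr 1
    ext x
    simp only [mem_filter, mem_erase, mem_Icc, mem_Ico] at hr ⊢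
    omega
  rw [← mul_prod_erase _ _ hr, prod_congr rfl hsplit, prod_mul_distrib, hlow, mul_assoc]

lemma Finset.exists_eq_update_of_sum_eq_add_one {ι : Type*} [DecidableEq ι] {s : Finset ι}
    {f g : ι → ℕ} (hle : ∀ i ∈ s, f i ≤ g i) (hsum : ∑ i ∈ s, g i = ∑ i ∈ s, f i + 1) :
    ∃ r ∈ s, ∀ i ∈ s, g i = update f r (f r + 1) i := by
  obtain ⟨r, hr, hlt⟩ : ∃ r ∈ s, f r < g r := by
    by_contra! h
    have := sum_le_sum h
    omega
  refine ⟨r, hr, fun i hi => ((sum_eq_sum_iff_of_le fun i hi => ?_).mp ?_ i hi).symm⟩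
  · rw [update_apply]
    split_ifs with h
    · subst h
      omega
    · exact hle i hi
  · rw [sum_update_of_mem hr, sdiff_singleton_eq_erase, hsum, ← add_sum_erase _ _ hr]
    ring

namespace StrictPartition

open scoped Nat

variable (lam : StrictPartition)

section Parts

lemma part_eq_zero {i : ℕ} (h : lam.length < i) : lam.part i = 0 :=
  List.getD_eq_default _ _ (by unfold length at h; omega)

lemma part_succ {m : ℕ} (hm : m < lam.parts.length) : lam.part (m + 1) = lam.parts[m] :=
  List.getD_eq_getElem _ _ hm

lemma part_pos {i : ℕ} (h1 : 1 ≤ i) (hi : i ≤ lam.length) : 0 < lam.part i := by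
  obtain ⟨m, rfl⟩ : ∃ m, i = m + 1 := ⟨i - 1, by omega⟩
  rw [lam.part_succ hi]
  exact lam.pos _ (List.getElem_mem _)

lemma part_lt_part {i j : ℕ} (h1 : 1 ≤ i) (hij : i < j) (hi : i ≤ lam.length) :
    lam.part j < lam.part i := by
  rcases le_or_gt j lam.length with hj | hj
  · obtain ⟨m, rfl⟩ : ∃ m, i = m + 1 := ⟨i - 1, by omega⟩
    obtain ⟨n, rfl⟩ : ∃ n, j = n + 1 := ⟨j - 1, by omega⟩
    rw [lam.part_succ hj, lam.part_succ hi]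
    exact List.pairwise_iff_getElem.mp lam.sorted m n hi hj (by omega)
  · rw [lam.part_eq_zero hj]
    exact lam.part_pos h1 hi

lemma part_le_part {i j : ℕ} (h1 : 1 ≤ i) (hij : i ≤ j) : lam.part j ≤ lam.part i := by
  rcases hij.eq_or_lt with rfl | hij
  · rfl
  · rcases le_or_gt i lam.length with hi | hi
    · exact (lam.part_lt_part h1 hij hi).le
    · rw [lam.part_eq_zero (hi.trans hij)]
      exact Nat.zero_le _

lemma part_add_sub_le {i j : ℕ} (h1 : 1 ≤ i) (hij : i ≤ j) (hj : j ≤ lam.length) :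
    lam.part j + (j - i) ≤ lam.part i := by
  induction j, hij using Nat.le_induction with
  | base => simp
  | succ n hin ih =>
    have := lam.part_lt_part (j := n + 1) (by omega) (Nat.lt_succ_self n) (by omega)
    have := ih (by omega)
    omega

lemma part_injOn : Set.InjOn lam.part (Icc 1 (lam.length + 1) : Finset ℕ) := by
  intro i hi j hj hij
  simp only [coe_Icc, Set.mem_Icc] at hi hj
  by_contra hne
  rcases Nat.lt_or_gt_of_ne hne with h | h
  · exact (lam.part_lt_part hi.1 h (by omega)).ne' hij
  · exact (lam.part_lt_part hj.1 h (by omega)).ne hij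

lemma length_le_size : lam.length ≤ lam.size :=
  List.length_le_sum_of_one_le _ lam.pos

lemma part_le_size (i : ℕ) : lam.part i ≤ lam.size := by
  rcases lt_or_ge (i - 1) lam.parts.length with h | h
  · rw [part, List.getD_eq_getElem _ _ h]
    exact List.le_sum_of_mem (List.getElem_mem h)
  · rw [part, List.getD_eq_default _ _ h]
    exact Nat.zero_le _

lemma mem_cells {i j : ℕ} : (i, j) ∈ lam.cells ↔ 1 ≤ i ∧ i < j ∧ j ≤ i + lam.part i := by
  rw [cells, mem_filter, mem_product, mem_range, mem_range]
  refine ⟨fun h => h.2, fun h => ⟨?_, h⟩⟩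
  have hi : i ≤ lam.length := by
    by_contra hc
    have := lam.part_eq_zero (not_le.mp hc)
    omega
  have := lam.part_le_size i
  have := lam.length_le_size
  omega

lemma ext_part {mu nu : StrictPartition} (h : ∀ i, 1 ≤ i → mu.part i = nu.part i) : mu = nu := by
  have hparts : ∀ n : ℕ, mu.parts[n]? = nu.parts[n]? := by
    intro n
    have hn := h (n + 1) (by omega)
    simp only [part, Nat.add_sub_cancel, List.getD_eq_getElem?_getD] at hn
    rcases h1 : mu.parts[n]? with _ | x <;> rcases h2 : nu.parts[n]? with _ | y <;>
      simp only [h1, h2, Option.getD_none, Option.getD_some] at hn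
    · rfl
    · exact absurd hn.symm (nu.pos y (List.mem_of_getElem? h2)).ne'
    · exact absurd hn (mu.pos x (List.mem_of_getElem? h1)).ne'
    · rw [hn]
  obtain ⟨mp, _, _⟩ := mu
  obtain ⟨np, _, _⟩ := nu
  obtain rfl : mp = np := List.ext_getElem? hparts
  rfl

lemma size_eq_sum {L : ℕ} (hL : lam.length ≤ L) : lam.size = ∑ i ∈ Icc 1 L, lam.part i := by
  rw [← Ico_add_one_right_eq_Icc, sum_Ico_eq_sum_range, Nat.add_sub_cancel]
  simp only [part, Nat.add_sub_cancel_left]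
  exact (lam.parts.sum_range_getD hL).symm

end Parts

def pairFactor (x y : ℕ) : ℚ := ((x : ℚ) + y) / ((x : ℚ) - y)

def hookProd (a : ℕ → ℕ) (L : ℕ) : ℚ :=
  ∏ i ∈ Icc 1 L, ((a i)! * ∏ k ∈ Ioc i L, pairFactor (a i) (a k))

section Hooks

lemma hook_eq {i j : ℕ} (h1 : 1 ≤ i) (hij : i ≤ j) :
    lam.hook (i, j) =
      #{i' ∈ Ioo i j | j ≤ i' + lam.part i'} + (i + lam.part i - j) + 1 + lam.part j := by
  have hcol : {b ∈ lam.cells | b.2 = j ∧ i < b.1} =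
      {i' ∈ Ioo i j | j ≤ i' + lam.part i'}.image (·, j) := by
    ext ⟨x, y⟩
    simp only [mem_filter, mem_image, mem_Ioo, mem_cells, Prod.mk.injEq]
    constructor
    · rintro ⟨⟨-, hxy, hle⟩, rfl, hix⟩
      exact ⟨x, ⟨⟨hix, hxy⟩, hle⟩, rfl, rfl⟩
    · rintro ⟨i', ⟨⟨hii', hi'j⟩, hle⟩, rfl, rfl⟩
      exact ⟨⟨by omega, hi'j, hle⟩, rfl, hii'⟩
  have hrow : {b ∈ lam.cells | b.1 = i ∧ j < b.2} = (Ioc j (i + lam.part i)).image (i, ·) := by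
    ext ⟨x, y⟩
    simp only [mem_filter, mem_image, mem_Ioc, mem_cells, Prod.mk.injEq]
    constructor
    · rintro ⟨⟨-, -, hle⟩, rfl, hjy⟩
      exact ⟨y, ⟨hjy, hle⟩, rfl, rfl⟩
    · rintro ⟨j', ⟨hjj', hle⟩, rfl, rfl⟩
      exact ⟨⟨h1, by omega, hle⟩, rfl, hjj'⟩
  rw [hook, hcol, hrow, card_image_of_injective _ (fun a b h => by simpa using h),
    card_image_of_injective _ (fun a b h => by simpa using h), Nat.card_Ioc]

lemma hook_of_le_length {i j : ℕ} (h1 : 1 ≤ i) (hij : i < j) (hj : j ≤ lam.length) :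
    lam.hook (i, j) = lam.part i + lam.part j := by
  have hfull : {i' ∈ Ioo i j | j ≤ i' + lam.part i'} = Ioo i j := by
    refine filter_true_of_mem fun i' hi' => ?_
    have := lam.part_add_sub_le (i := i') (by simp at hi'; omega) (mem_Ioo.mp hi').2.le hj
    omega
  have := lam.part_add_sub_le h1 hij.le hj
  rw [lam.hook_eq h1 hij.le, hfull, Nat.card_Ioo]
  omega

/-- For a column `j > ℓ(λ)`, the number of boxes below `(i, j)`. -/
def leg (i j : ℕ) : ℕ := #{i' ∈ Ioc i lam.length | j ≤ i' + lam.part i'}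

lemma hook_add_eq {i j : ℕ} (h1 : 1 ≤ i) (hi : i ≤ lam.length) (hj : lam.length < j)
    (hcell : j ≤ i + lam.part i) :
    lam.hook (i, j) + j = lam.part i + i + 1 + lam.leg i j := by
  have hleg : {i' ∈ Ioo i j | j ≤ i' + lam.part i'} =
      {i' ∈ Ioc i lam.length | j ≤ i' + lam.part i'} := by
    ext i'
    simp only [mem_filter, mem_Ioo, mem_Ioc]
    constructor
    · rintro ⟨⟨hii', hi'j⟩, hle⟩
      refine ⟨⟨hii', ?_⟩, hle⟩
      by_contra hc
      have := lam.part_eq_zero (not_le.mp hc)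
      omega
    · rintro ⟨⟨hii', hi'ℓ⟩, hle⟩
      exact ⟨⟨hii', by omega⟩, hle⟩
  rw [lam.hook_eq h1 (by omega), lam.part_eq_zero hj, hleg, leg]
  omega

lemma leg_anti (i : ℕ) {j j' : ℕ} (h : j ≤ j') : lam.leg i j' ≤ lam.leg i j :=
  card_le_card fun _ hx => by simp only [mem_filter] at hx ⊢; exact ⟨hx.1, by omega⟩

lemma leg_length_succ (i : ℕ) : lam.leg i (lam.length + 1) = lam.length - i := by
  rw [leg, filter_true_of_mem, Nat.card_Ioc]
  intro i' hi'
  simp only [mem_Ioc] at hi'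
  have := lam.part_add_sub_le (i := i') (by omega) hi'.2 le_rfl
  have := lam.part_pos (i := lam.length) (by omega) le_rfl
  omega

lemma sub_le_leg {i k : ℕ} (hk : k ≤ lam.length) :
    k - i ≤ lam.leg i (lam.part k + k) := by
  calc k - i = #(Ioc i k) := (Nat.card_Ioc _ _).symm
  _ ≤ _ := card_le_card fun i' hi' => by
    simp only [mem_Ioc, mem_filter] at hi' ⊢
    have := lam.part_add_sub_le (i := i') (by omega) hi'.2 hk
    exact ⟨⟨hi'.1, by omega⟩, by omega⟩

lemma leg_le {i k : ℕ} (hik : i < k) :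
    lam.leg i (lam.part k + k + 1) ≤ k - 1 - i := by
  calc lam.leg i (lam.part k + k + 1) ≤ #(Ioc i (k - 1)) := card_le_card fun i' hi' => by
        simp only [mem_Ioc, mem_filter] at hi' ⊢
        refine ⟨hi'.1.1, ?_⟩
        by_contra hc
        have := lam.part_add_sub_le (i := k) (j := i') (by omega) (by omega) hi'.1.2
        omega
  _ = k - 1 - i := Nat.card_Ioc _ _

lemma one_le_hook (b : ℕ × ℕ) : 1 ≤ lam.hook b := by
  unfold hook
  omega

variable {lam} in
lemma hook_add_sub_le {i j j' : ℕ} (h1 : 1 ≤ i) (hi : i ≤ lam.length) (hj : lam.length < j)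
    (hjj' : j ≤ j') (hj' : j' ≤ i + lam.part i) :
    lam.hook (i, j') + (j' - j) ≤ lam.hook (i, j) := by
  have := lam.hook_add_eq h1 hi hj (by omega)
  have := lam.hook_add_eq h1 hi (by omega) hj'
  have := lam.leg_anti i hjj'
  omega

lemma hook_le_part {i j : ℕ} (h1 : 1 ≤ i) (hi : i ≤ lam.length) (hj : lam.length < j)
    (hj' : j ≤ i + lam.part i) : lam.hook (i, j) ≤ lam.part i := by
  have := lam.hook_add_eq h1 hi hj hj'
  have := lam.leg_length_succ i ▸ lam.leg_anti i (show lam.length + 1 ≤ j by omega)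
  omega

/-- The key to the row product: the hook lengths beyond column `ℓ(λ)` skip exactly the values
`λᵢ - λₖ`, because the hook length drops by one more than usual exactly when passing column
`λₖ + k`. -/
lemma hook_ne_part_sub_part {i j k : ℕ} (h1 : 1 ≤ i) (hj : lam.length < j)
    (hj' : j ≤ i + lam.part i) (hik : i < k) (hk : k ≤ lam.length) :
    lam.hook (i, j) ≠ lam.part i - lam.part k := by
  have hi : i ≤ lam.length := by omega
  have := lam.part_add_sub_le h1 hik.le hk
  have := lam.part_add_sub_le (i := k) (by omega) hk le_rfl
  have := lam.part_pos (i := lam.length) (by omega) le_rfl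
  have hkk := lam.hook_add_eq h1 hi (j := lam.part k + k) (by omega) (by omega)
  have := lam.sub_le_leg (i := i) hk
  rcases le_or_gt j (lam.part k + k) with hle | hlt
  · have := hook_add_sub_le h1 hi hj hle (by omega)
    omega
  · have := lam.hook_add_eq h1 hi (j := lam.part k + k + 1) (by omega) (by omega)
    have := lam.leg_le (k := k) hik
    have := hook_add_sub_le (j := lam.part k + k + 1) h1 hi (by omega) (by omega) hj'
    omega

lemma injOn_hook_outer {i : ℕ} (h1 : 1 ≤ i) (hi : i ≤ lam.length) :
    Set.InjOn (fun j => lam.hook (i, j)) (Ioc lam.length (i + lam.part i) : Finset ℕ) := by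
  intro x hx y hy hxy
  simp only [coe_Ioc, Set.mem_Ioc] at hx hy
  by_contra hne
  rcases Nat.lt_or_gt_of_ne hne with h | h
  · have := hook_add_sub_le h1 hi hx.1 h.le hy.2
    simp only at hxy
    omega
  · have := hook_add_sub_le h1 hi hy.1 h.le hx.2
    simp only at hxy
    omega

lemma injOn_part_sub {i : ℕ} (h1 : 1 ≤ i) :
    Set.InjOn (fun k => lam.part i - lam.part k) (Ioc i lam.length : Finset ℕ) := by
  intro x hx y hy hxy
  simp only [coe_Ioc, Set.mem_Ioc] at hx hy
  have := lam.part_lt_part h1 hx.1 (by omega)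
  have := lam.part_lt_part h1 hy.1 (by omega)
  have : lam.part x = lam.part y := by simp only at hxy; omega
  exact lam.part_injOn (by simp; omega) (by simp; omega) this

lemma image_part_sub_subset {i : ℕ} (h1 : 1 ≤ i) :
    (Ioc i lam.length).image (fun k => lam.part i - lam.part k) ⊆ Icc 1 (lam.part i) := by
  intro v hv
  simp only [mem_image, mem_Ioc] at hv
  obtain ⟨k, ⟨hik, hk⟩, rfl⟩ := hv
  have := lam.part_lt_part h1 hik (by omega)
  simp only [mem_Icc]
  omega

lemma image_hook_outer {i : ℕ} (h1 : 1 ≤ i) (hi : i ≤ lam.length) :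
    (Ioc lam.length (i + lam.part i)).image (fun j => lam.hook (i, j)) =
      Icc 1 (lam.part i) \ (Ioc i lam.length).image (fun k => lam.part i - lam.part k) := by
  have := lam.part_add_sub_le h1 hi le_rfl
  have := lam.part_pos (i := lam.length) (by omega) le_rfl
  refine eq_of_subset_of_card_le (fun v hv => ?_) ?_
  · simp only [mem_image, mem_Ioc] at hv
    obtain ⟨j, ⟨hj1, hj2⟩, rfl⟩ := hv
    simp only [mem_sdiff, mem_Icc, mem_image, mem_Ioc, not_exists, not_and]
    exact ⟨⟨lam.one_le_hook _, lam.hook_le_part h1 hi hj1 hj2⟩,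
      fun k hk heq => lam.hook_ne_part_sub_part h1 hj1 hj2 hk.1 hk.2 heq.symm⟩
  · rw [card_sdiff_of_subset (lam.image_part_sub_subset h1),
      card_image_of_injOn (lam.injOn_part_sub h1),
      card_image_of_injOn (lam.injOn_hook_outer h1 hi), Nat.card_Icc, Nat.card_Ioc, Nat.card_Ioc]
    omega

lemma prod_hook_outer {i : ℕ} (h1 : 1 ≤ i) (hi : i ≤ lam.length) :
    (∏ j ∈ Ioc lam.length (i + lam.part i), lam.hook (i, j)) *
      ∏ k ∈ Ioc i lam.length, (lam.part i - lam.part k) = (lam.part i)! := by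
  have e1 : ∏ j ∈ Ioc lam.length (i + lam.part i), lam.hook (i, j) =
      ∏ v ∈ (Ioc lam.length (i + lam.part i)).image (fun j => lam.hook (i, j)), v :=
    (prod_image (f := id) (lam.injOn_hook_outer h1 hi)).symm
  have e2 : ∏ k ∈ Ioc i lam.length, (lam.part i - lam.part k) =
      ∏ v ∈ (Ioc i lam.length).image (fun k => lam.part i - lam.part k), v :=
    (prod_image (f := id) (lam.injOn_part_sub h1)).symm
  rw [e1, e2, lam.image_hook_outer h1 hi, prod_sdiff (lam.image_part_sub_subset h1),
    ← Ico_add_one_right_eq_Icc, prod_Ico_id_eq_factorial]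

lemma prod_hook_row {i : ℕ} (h1 : 1 ≤ i) (hi : i ≤ lam.length) :
    (∏ j ∈ Ioc i (i + lam.part i), (lam.hook (i, j) : ℚ)) =
      (lam.part i)! * ∏ k ∈ Ioc i lam.length, pairFactor (lam.part i) (lam.part k) := by
  have := lam.part_add_sub_le h1 hi le_rfl
  rw [← Ioc_union_Ioc_eq_Ioc hi (by omega), prod_union (disjoint_left.mpr fun x hx hy => by
    simp only [mem_Ioc] at hx hy; omega)]
  have hlt : ∀ k ∈ Ioc i lam.length, lam.part k < lam.part i := fun k hk =>
    lam.part_lt_part h1 (mem_Ioc.mp hk).1 hi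
  have hinner : ∏ k ∈ Ioc i lam.length, (lam.hook (i, k) : ℚ) =
      ∏ k ∈ Ioc i lam.length, ((lam.part i : ℚ) + lam.part k) :=
    prod_congr rfl fun k hk => by
      rw [lam.hook_of_le_length h1 (mem_Ioc.mp hk).1 (mem_Ioc.mp hk).2]; push_cast; rfl
  have houter : (∏ j ∈ Ioc lam.length (i + lam.part i), (lam.hook (i, j) : ℚ)) *
      ∏ k ∈ Ioc i lam.length, ((lam.part i : ℚ) - lam.part k) = (lam.part i)! := by
    have := congrArg (Nat.cast (R := ℚ)) (lam.prod_hook_outer h1 hi)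
    rw [Nat.cast_mul, Nat.cast_prod, Nat.cast_prod] at this
    rw [← this, prod_congr rfl fun k hk => (Nat.cast_sub (hlt k hk).le).symm]
  have hne : ∏ k ∈ Ioc i lam.length, ((lam.part i : ℚ) - lam.part k) ≠ 0 :=
    prod_ne_zero_iff.mpr fun k hk => sub_ne_zero.mpr (by exact_mod_cast (hlt k hk).ne')
  rw [hinner, ← houter]
  simp only [pairFactor, prod_div_distrib]
  field_simp

end Hooks

section HookProduct

lemma cells_eq_biUnion :
    lam.cells = (Icc 1 lam.length).biUnion fun i => (Ioc i (i + lam.part i)).image (i, ·) := by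
  ext ⟨x, y⟩
  simp only [mem_cells, mem_biUnion, mem_Icc, mem_image, mem_Ioc, Prod.mk.injEq]
  constructor
  · rintro ⟨h1, h2, h3⟩
    have hx : x ≤ lam.length := by
      by_contra hc
      have := lam.part_eq_zero (not_le.mp hc)
      omega
    exact ⟨x, ⟨h1, hx⟩, y, ⟨h2, h3⟩, rfl, rfl⟩
  · rintro ⟨i, ⟨hi1, -⟩, j, ⟨hj1, hj2⟩, rfl, rfl⟩
    exact ⟨hi1, hj1, hj2⟩

/-- The shifted hook length formula. -/
theorem H_eq_hookProd : (lam.H : ℚ) = hookProd lam.part lam.length := by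
  rw [H, Nat.cast_prod, cells_eq_biUnion, prod_biUnion]
  · refine prod_congr rfl fun i hi => ?_
    rw [prod_image fun x _ y _ h => by simpa using h]
    exact lam.prod_hook_row (mem_Icc.mp hi).1 (mem_Icc.mp hi).2
  · intro s _ t _ hst
    refine disjoint_left.mpr ?_
    simp only [mem_image]
    rintro _ ⟨j, -, rfl⟩ ⟨j', -, h⟩
    exact hst (Prod.mk.inj h).1.symm

lemma pairFactor_swap (x y : ℕ) : pairFactor y x = -pairFactor x y := by
  rw [pairFactor, pairFactor, add_comm, ← neg_sub, div_neg]

lemma pairFactor_ne_zero {x y : ℕ} (h : x ≠ y) : pairFactor x y ≠ 0 :=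
  div_ne_zero (by exact_mod_cast (show x + y ≠ 0 by omega)) (sub_ne_zero.mpr (by exact_mod_cast h))

lemma pairFactor_zero_right {x : ℕ} (hx : x ≠ 0) : pairFactor x 0 = 1 := by
  rw [pairFactor, Nat.cast_zero, add_zero, sub_zero, div_self (by exact_mod_cast hx)]

lemma hookProd_congr {a b : ℕ → ℕ} {L : ℕ} (h : ∀ i ∈ Icc 1 L, a i = b i) :
    hookProd a L = hookProd b L :=
  prod_congr rfl fun i hi => by
    rw [h i hi, prod_congr rfl fun k hk => by
      rw [h k (mem_Icc.mpr ⟨by simp at hi hk; omega, (mem_Ioc.mp hk).2⟩)]]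

lemma hookProd_succ {a : ℕ → ℕ} {L : ℕ} (ha : ∀ i ∈ Icc 1 L, a i ≠ 0) (hL : a (L + 1) = 0) :
    hookProd a (L + 1) = hookProd a L := by
  rw [hookProd, prod_Icc_succ_top (by omega), Ioc_self, prod_empty, hL, Nat.factorial_zero,
    Nat.cast_one, mul_one, mul_one]
  refine prod_congr rfl fun i hi => ?_
  rw [prod_Ioc_succ_top (mem_Icc.mp hi).2, hL, pairFactor_zero_right (ha i hi), mul_one]

lemma H_eq_hookProd_of_le {L : ℕ} (h : lam.length ≤ L) (h' : L ≤ lam.length + 1) :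
    (lam.H : ℚ) = hookProd lam.part L := by
  obtain rfl | rfl : L = lam.length ∨ L = lam.length + 1 := by omega
  · exact lam.H_eq_hookProd
  · rw [hookProd_succ (fun i hi => (lam.part_pos (mem_Icc.mp hi).1 (mem_Icc.mp hi).2).ne')
      (lam.part_eq_zero (by omega)), H_eq_hookProd]

lemma prod_factorial_update (a : ℕ → ℕ) {L r : ℕ} (hr : r ∈ Icc 1 L) :
    ∏ i ∈ Icc 1 L, ((update a r (a r + 1) i)! : ℚ) =
      ((a r : ℚ) + 1) * ∏ i ∈ Icc 1 L, ((a i)! : ℚ) := by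
  rw [← mul_prod_erase _ _ hr, ← mul_prod_erase _ (fun i => ((a i)! : ℚ)) hr, update_self,
    prod_congr rfl fun i hi => by rw [update_of_ne (ne_of_mem_erase hi)], Nat.factorial_succ]
  push_cast
  ring

lemma prod_pairFactor_update {a : ℕ → ℕ} {L r : ℕ} (hr : r ∈ Icc 1 L)
    (ha : ∀ j ∈ Icc 1 L, j ≠ r → a j ≠ a r) :
    ∏ i ∈ Icc 1 L, ∏ k ∈ Ioc i L,
        pairFactor (update a r (a r + 1) i) (update a r (a r + 1) k) =
      (∏ j ∈ (Icc 1 L).erase r, pairFactor (a r + 1) (a j) / pairFactor (a r) (a j)) *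
        ∏ i ∈ Icc 1 L, ∏ k ∈ Ioc i L, pairFactor (a i) (a k) := by
  set a' := update a r (a r + 1)
  set ρ : ℕ → ℚ := fun j => pairFactor (a r + 1) (a j) / pairFactor (a r) (a j)
  have ha' : ∀ j ∈ (Icc 1 L).erase r, a' j = a j :=
    fun j hj => update_of_ne (ne_of_mem_erase hj) _ _
  have har : a' r = a r + 1 := update_self ..
  have hρ : ∀ j ∈ (Icc 1 L).erase r, pairFactor (a r + 1) (a j) = ρ j * pairFactor (a r) (a j) :=
    fun j hj => (div_mul_cancel₀ _ (pairFactor_ne_zero (ha j (mem_of_mem_erase hj)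
      (ne_of_mem_erase hj)).symm)).symm
  have hρ' : ∀ j ∈ (Icc 1 L).erase r, pairFactor (a j) (a r + 1) = ρ j * pairFactor (a j) (a r) :=
    fun j hj => by rw [pairFactor_swap (a r + 1), pairFactor_swap (a r), hρ j hj, mul_neg]
  have hIoc : Ioc r L ⊆ (Icc 1 L).erase r := fun k hk => by
    simp only [mem_Ioc, mem_erase, mem_Icc] at hk hr ⊢; omega
  have hIco : Ico 1 r ⊆ (Icc 1 L).erase r := fun k hk => by
    simp only [mem_Ico, mem_erase, mem_Icc] at hk hr ⊢; omega
  have hrest : ∏ i ∈ (Icc 1 L).erase r, ∏ k ∈ (Ioc i L).erase r, pairFactor (a' i) (a' k) =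
      ∏ i ∈ (Icc 1 L).erase r, ∏ k ∈ (Ioc i L).erase r, pairFactor (a i) (a k) :=
    prod_congr rfl fun i hi => prod_congr rfl fun k hk => by
      rw [ha' i hi, ha' k (mem_erase.mpr ⟨ne_of_mem_erase hk, by simp at hi hk ⊢; omega⟩)]
  have hhigh : ∏ k ∈ Ioc r L, pairFactor (a' r) (a' k) =
      (∏ k ∈ Ioc r L, ρ k) * ∏ k ∈ Ioc r L, pairFactor (a r) (a k) := by
    rw [← prod_mul_distrib]
    exact prod_congr rfl fun k hk => by rw [har, ha' k (hIoc hk), hρ k (hIoc hk)]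
  have hlow : ∏ i ∈ Ico 1 r, pairFactor (a' i) (a' r) =
      (∏ i ∈ Ico 1 r, ρ i) * ∏ i ∈ Ico 1 r, pairFactor (a i) (a r) := by
    rw [← prod_mul_distrib]
    exact prod_congr rfl fun i hi => by rw [har, ha' i (hIco hi), hρ' i (hIco hi)]
  rw [prod_Icc_Ioc_eq (fun i k => pairFactor (a' i) (a' k)) hr,
    prod_Icc_Ioc_eq (fun i k => pairFactor (a i) (a k)) hr, hrest, hhigh, hlow,
    prod_Icc_erase ρ hr]
  ring

lemma hookProd_update {a : ℕ → ℕ} {L r : ℕ} (hr : r ∈ Icc 1 L)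
    (ha : ∀ j ∈ Icc 1 L, j ≠ r → a j ≠ a r) :
    hookProd (update a r (a r + 1)) L =
      ((a r : ℚ) + 1) *
        (∏ j ∈ (Icc 1 L).erase r, pairFactor (a r + 1) (a j) / pairFactor (a r) (a j)) *
          hookProd a L := by
  rw [hookProd, hookProd, prod_mul_distrib, prod_mul_distrib, prod_factorial_update a hr,
    prod_pairFactor_update hr ha]
  ring

end HookProduct

section AddingBoxes

def ofFun (a : ℕ → ℕ) (L : ℕ) (hpos : ∀ i, 1 ≤ i → i ≤ L → 0 < a i)
    (hlt : ∀ i j, 1 ≤ i → i < j → j ≤ L → a j < a i) : StrictPartition where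
  parts := (List.range L).map fun i => a (i + 1)
  pos := by
    simp only [List.mem_map, List.mem_range]
    rintro _ ⟨i, hi, rfl⟩
    exact hpos _ (by omega) hi
  sorted := by
    rw [List.pairwise_map]
    exact List.pairwise_lt_range.imp_of_mem fun _ hj hij =>
      hlt _ _ (by omega) (by omega) (List.mem_range.mp hj)

section OfFun

variable {a : ℕ → ℕ} {L : ℕ} {hpos : ∀ i, 1 ≤ i → i ≤ L → 0 < a i}
  {hlt : ∀ i j, 1 ≤ i → i < j → j ≤ L → a j < a i}

lemma ofFun_length : (ofFun a L hpos hlt).length = L := by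
  simp [ofFun, length]

lemma ofFun_part {i : ℕ} (h1 : 1 ≤ i) (hi : i ≤ L) : (ofFun a L hpos hlt).part i = a i := by
  obtain ⟨m, rfl⟩ : ∃ m, i = m + 1 := ⟨i - 1, by omega⟩
  rw [part_succ _ (by simp [ofFun]; omega)]
  simp [ofFun]

end OfFun

/-- The rows `r` at the end of which a box can be added; `r = ℓ(λ) + 1` is a new row. -/
def addableRows : Finset ℕ :=
  {r ∈ Icc 1 (lam.length + 1) | r = 1 ∨ lam.part r + 1 < lam.part (r - 1)}

variable {lam}

lemma mem_addableRows {r : ℕ} :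
    r ∈ lam.addableRows ↔
      (1 ≤ r ∧ r ≤ lam.length + 1) ∧ (r = 1 ∨ lam.part r + 1 < lam.part (r - 1)) := by
  rw [addableRows, mem_filter, mem_Icc]

lemma update_pos_of_mem_addableRows {r : ℕ} (hr : r ∈ lam.addableRows) {i : ℕ} (h1 : 1 ≤ i)
    (hi : i ≤ max lam.length r) : 0 < update lam.part r (lam.part r + 1) i := by
  rw [mem_addableRows] at hr
  rw [update_apply]
  split_ifs
  · omega
  · exact lam.part_pos h1 (by omega)

lemma update_lt_of_mem_addableRows {r : ℕ} (hr : r ∈ lam.addableRows) {i j : ℕ} (h1 : 1 ≤ i)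
    (hij : i < j) (hj : j ≤ max lam.length r) :
    update lam.part r (lam.part r + 1) j < update lam.part r (lam.part r + 1) i := by
  rw [mem_addableRows] at hr
  simp only [update_apply]
  split_ifs with hjr hir hir
  · omega
  · subst hjr
    have := lam.part_le_part h1 (show i ≤ j - 1 by omega)
    omega
  · subst hir
    have := lam.part_lt_part h1 hij (by omega)
    omega
  · exact lam.part_lt_part h1 hij (by omega)

variable (lam) in
/-- `λ` with a box added at the end of row `r`, or `λ` itself if `r` is not addable. -/
def bump (r : ℕ) : StrictPartition :=
  if hr : r ∈ lam.addableRows then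
    ofFun (update lam.part r (lam.part r + 1)) (max lam.length r)
      (fun _ h1 hi => update_pos_of_mem_addableRows hr h1 hi)
      (fun _ _ h1 hij hj => update_lt_of_mem_addableRows hr h1 hij hj)
  else lam

lemma bump_length {r : ℕ} (hr : r ∈ lam.addableRows) : (lam.bump r).length = max lam.length r := by
  rw [bump, dif_pos hr, ofFun_length]

lemma bump_part {r : ℕ} (hr : r ∈ lam.addableRows) {i : ℕ} (h1 : 1 ≤ i) :
    (lam.bump r).part i = update lam.part r (lam.part r + 1) i := by
  rcases le_or_gt i (max lam.length r) with hi | hi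
  · rw [bump, dif_pos hr, ofFun_part h1 hi]
  · rw [part_eq_zero _ (by rwa [bump_length hr]), update_of_ne (by omega),
      lam.part_eq_zero (by omega)]

lemma addBox_bump {r : ℕ} (hr : r ∈ lam.addableRows) : lam.AddBox (lam.bump r) := by
  have hr' := (mem_addableRows.mp hr).1
  have hle : ∀ i, 1 ≤ i → lam.part i ≤ (lam.bump r).part i := fun i h1 => by
    rw [bump_part hr h1, update_apply]
    split_ifs with h
    · subst h
      omega
    · rfl
  refine ⟨fun i => ?_, ?_⟩
  · rcases i with _ | i
    · -- `part 0` is `part 1`, by truncated subtraction in the definition of `part`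
      exact hle 1 le_rfl
    · exact hle _ (by omega)
  · rw [size_eq_sum _ (L := lam.length + 1) (by rw [bump_length hr]; omega),
      size_eq_sum _ (L := lam.length + 1) (by omega),
      sum_congr rfl fun i hi => bump_part hr (mem_Icc.mp hi).1, sum_update_of_mem (mem_Icc.mpr hr'),
      sdiff_singleton_eq_erase, ← add_sum_erase _ _ (mem_Icc.mpr hr')]
    ring

lemma exists_bump_of_addBox {nu : StrictPartition} (h : lam.AddBox nu) :
    ∃ r ∈ lam.addableRows, lam.bump r = nu := by
  obtain ⟨hle, hsize⟩ := h
  have hlen : lam.length ≤ nu.length := by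
    by_contra hc
    have := lam.part_pos (i := lam.length) (by omega) le_rfl
    have := nu.part_eq_zero (i := lam.length) (by omega)
    have := hle lam.length
    omega
  obtain ⟨r, hrs, hr⟩ := exists_eq_update_of_sum_eq_add_one (s := Icc 1 nu.length)
    (fun i _ => hle i) (by rw [← size_eq_sum _ le_rfl, ← size_eq_sum _ hlen, hsize])
  have hr' := mem_Icc.mp hrs
  have hnu : ∀ i, 1 ≤ i → nu.part i = update lam.part r (lam.part r + 1) i := by
    intro i h1
    rcases le_or_gt i nu.length with hi | hi
    · exact hr i (mem_Icc.mpr ⟨h1, hi⟩)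
    · rw [nu.part_eq_zero hi, update_of_ne (by omega), lam.part_eq_zero (by omega)]
  have hnur : nu.part r = lam.part r + 1 := by rw [hnu r hr'.1, update_self]
  have hadd : r ∈ lam.addableRows := by
    refine mem_addableRows.mpr ⟨⟨hr'.1, ?_⟩, or_iff_not_imp_left.mpr fun hr1 => ?_⟩
    · by_contra hc
      have := nu.part_le_part (i := lam.length + 1) (j := r) (by omega) (by omega)
      rw [hnu (lam.length + 1) (by omega), update_of_ne (by omega),
        lam.part_eq_zero (by omega)] at this
      omega
    · have := nu.part_lt_part (i := r - 1) (j := r) (by omega) (by omega) (by omega)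
      rwa [hnur, hnu (r - 1) (by omega), update_of_ne (by omega)] at this
  exact ⟨r, hadd, ext_part fun i h1 => by rw [bump_part hadd h1, hnu i h1]⟩

lemma addBox_iff {nu : StrictPartition} : lam.AddBox nu ↔ ∃ r ∈ lam.addableRows, lam.bump r = nu :=
  ⟨exists_bump_of_addBox, by rintro ⟨r, hr, rfl⟩; exact addBox_bump hr⟩

variable (lam) in
lemma bump_injOn : Set.InjOn lam.bump lam.addableRows := by
  intro r hr s hs h
  by_contra hne
  have := congrArg (part · r) h
  rw [bump_part hr (mem_addableRows.mp hr).1.1, bump_part hs (mem_addableRows.mp hr).1.1,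
    update_self, update_of_ne hne] at this
  omega

variable (lam) in
lemma finsum_addBox (p : ℕ → Prop) [DecidablePred p] (g : StrictPartition → ℚ) :
    ∑ᶠ nu ∈ {nu | lam.AddBox nu ∧ p nu.length}, g nu =
      ∑ r ∈ lam.addableRows with p (lam.bump r).length, g (lam.bump r) := by
  classical
  have hset : {nu | lam.AddBox nu ∧ p nu.length} =
      ↑({r ∈ lam.addableRows | p (lam.bump r).length}.image lam.bump) := by
    ext nu
    simp only [Set.mem_ofPred_eq, addBox_iff, coe_image, coe_filter, Set.mem_image]
    constructor
    · rintro ⟨⟨r, hr, rfl⟩, hp⟩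
      exact ⟨r, ⟨hr, hp⟩, rfl⟩
    · rintro ⟨r, ⟨hr, hp⟩, rfl⟩
      exact ⟨⟨r, hr, rfl⟩, hp⟩
  rw [hset, finsum_mem_coe_finset, sum_image fun r hr s hs =>
    lam.bump_injOn (mem_filter.mp hr).1 (mem_filter.mp hs).1]

end AddingBoxes

section Lagrange

/-- The `r`-th term of Lagrange's formula for `P = ∏_{j ≤ ℓ} (X - C(λⱼ, 2))` at the nodes
`vᵣ = C(λᵣ + 1, 2)`, `1 ≤ r ≤ ℓ + 1`. -/
def lagrangeTerm (r : ℕ) : ℚ :=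
  (∏ j ∈ Icc 1 lam.length, (((lam.part r + 1).choose 2 : ℚ) - (lam.part j).choose 2)) /
    ∏ j ∈ (Icc 1 (lam.length + 1)).erase r,
      (((lam.part r + 1).choose 2 : ℚ) - (lam.part j + 1).choose 2)

theorem sum_lagrangeTerm : ∑ r ∈ Icc 1 (lam.length + 1), lam.lagrangeTerm r = 1 := by
  have hmono : StrictMono fun n : ℕ => ((n + 1).choose 2 : ℚ) := fun x y hxy => by
    have : (x : ℚ) < y := by exact_mod_cast hxy
    simp only [Nat.cast_choose_two]
    push_cast
    nlinarith [(Nat.cast_nonneg x : (0 : ℚ) ≤ x)]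
  have := Lagrange.leadingCoeff_eq_sum (hmono.injective.comp_injOn lam.part_injOn)
    (P := Lagrange.nodal (Icc 1 lam.length) fun j => ((lam.part j).choose 2 : ℚ))
    (by rw [Lagrange.degree_nodal, Nat.card_Icc, Nat.card_Icc]; norm_cast)
  rw [Lagrange.nodal_monic.leadingCoeff] at this
  simpa only [lagrangeTerm, Lagrange.eval_nodal, comp_apply] using this.symm

lemma lagrangeTerm_eq_zero {r : ℕ} (hr2 : 2 ≤ r) (hr : r ≤ lam.length + 1)
    (h : lam.part (r - 1) = lam.part r + 1) : lam.lagrangeTerm r = 0 := by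
  rw [lagrangeTerm, prod_eq_zero (i := r - 1) (mem_Icc.mpr ⟨by omega, by omega⟩)
    (by rw [h, sub_self]), zero_div]

lemma choose_two_sub_div (x y : ℕ) :
    (((x + 1).choose 2 : ℚ) - y.choose 2) / ((x + 1).choose 2 - (y + 1).choose 2) =
      (pairFactor (x + 1) y / pairFactor x y)⁻¹ := by
  rw [inv_div, pairFactor, pairFactor, div_div_div_eq, Nat.cast_choose_two, Nat.cast_choose_two,
    Nat.cast_choose_two]
  push_cast
  rw [← div_div_div_cancel_right₀ (two_ne_zero' ℚ) ((x + y) * (x + 1 - y) : ℚ)]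
  congr 1 <;> ring

/-- `H_{λ + □_r} / H_λ`, see `H_bump`. -/
def bumpFactor (r : ℕ) : ℚ :=
  (lam.part r + 1) * ∏ j ∈ (Icc 1 (lam.length + 1)).erase r,
    pairFactor (lam.part r + 1) (lam.part j) / pairFactor (lam.part r) (lam.part j)

variable {lam}

lemma H_bump {r : ℕ} (hr : r ∈ lam.addableRows) :
    ((lam.bump r).H : ℚ) = lam.bumpFactor r * lam.H := by
  have hr' := (mem_addableRows.mp hr).1
  rw [H_eq_hookProd_of_le _ (L := lam.length + 1) (by rw [bump_length hr]; omega)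
      (by rw [bump_length hr]; omega),
    hookProd_congr fun i hi => bump_part hr (mem_Icc.mp hi).1,
    hookProd_update (mem_Icc.mpr hr') fun j hj hjr =>
      lam.part_injOn.ne (mem_coe.mpr hj) (mem_coe.mpr (mem_Icc.mpr hr')) hjr,
    ← H_eq_hookProd_of_le _ (Nat.le_succ _) le_rfl, bumpFactor]

lemma lagrangeTerm_length_succ :
    lam.lagrangeTerm (lam.length + 1) = 1 / lam.bumpFactor (lam.length + 1) := by
  have h0 : (lam.part (lam.length + 1) : ℚ) + 1 = 1 := by
    rw [lam.part_eq_zero (Nat.lt_succ_self _), Nat.cast_zero, zero_add]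
  rw [lagrangeTerm, bumpFactor, Icc_erase_right, Ico_add_one_right_eq_Icc, ← prod_div_distrib,
    prod_congr rfl fun j _ => choose_two_sub_div _ _, prod_inv_distrib, h0, one_mul, one_div]

lemma lagrangeTerm_of_le {r : ℕ} (h1 : 1 ≤ r) (hr : r ≤ lam.length) :
    lam.lagrangeTerm r = 2 / lam.bumpFactor r := by
  have hrℓ : r ∈ Icc 1 lam.length := mem_Icc.mpr ⟨h1, hr⟩
  have hx : lam.part r ≠ 0 := (lam.part_pos h1 hr).ne'
  have hnew : lam.length + 1 ∉ (Icc 1 lam.length).erase r := by simp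
  have herase : (Icc 1 (lam.length + 1)).erase r =
      insert (lam.length + 1) ((Icc 1 lam.length).erase r) := by
    rw [← insert_Icc_right_eq_Icc_add_one (by omega), erase_insert_of_ne (by omega)]
  have hself : (((lam.part r + 1).choose 2 : ℚ) - (lam.part r).choose 2) /
      (((lam.part r + 1).choose 2 : ℚ) - (lam.part (lam.length + 1) + 1).choose 2) =
        2 / (lam.part r + 1) := by
    have : (lam.part r : ℚ) ≠ 0 := by exact_mod_cast hx
    rw [lam.part_eq_zero (Nat.lt_succ_self _), Nat.cast_choose_two, Nat.cast_choose_two]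
    norm_num
    field_simp
    ring
  have hnewRow : pairFactor (lam.part r + 1) (lam.part (lam.length + 1)) /
      pairFactor (lam.part r) (lam.part (lam.length + 1)) = 1 := by
    rw [lam.part_eq_zero (Nat.lt_succ_self _), pairFactor_zero_right hx,
      pairFactor_zero_right (Nat.succ_ne_zero _), div_one]
  rw [lagrangeTerm, bumpFactor, herase, prod_insert hnew, prod_insert hnew,
    ← mul_prod_erase _ _ hrℓ, mul_div_mul_comm, hself, ← prod_div_distrib,
    prod_congr rfl fun j _ => choose_two_sub_div _ _, prod_inv_distrib, hnewRow, one_mul,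
    ← div_div, div_eq_mul_inv (2 / _)]

lemma sum_lagrangeTerm_addableRows : ∑ r ∈ lam.addableRows, lam.lagrangeTerm r = 1 := by
  refine (sum_subset (filter_subset _ _) fun r hr hrA => ?_).trans lam.sum_lagrangeTerm
  have hr' := mem_Icc.mp hr
  simp only [mem_filter, hr, true_and, not_or, not_lt] at hrA
  have := lam.part_lt_part (i := r - 1) (j := r) (by omega) (by omega) (by omega)
  exact lam.lagrangeTerm_eq_zero (by omega) hr'.2 (by omega)

lemma lagrangeTerm_div_H {r : ℕ} (hr : r ∈ lam.addableRows) :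
    lam.lagrangeTerm r / lam.H =
      if r = lam.length + 1 then 1 / ((lam.bump r).H : ℚ) else 2 * (1 / ((lam.bump r).H : ℚ)) := by
  have hr' := (mem_addableRows.mp hr).1
  rw [H_bump hr]
  split_ifs with h
  · subst h
    rw [lagrangeTerm_length_succ, div_div]
  · rw [lagrangeTerm_of_le hr'.1 (by omega), div_div, mul_one_div]

end Lagrange

end StrictPartition

open StrictPartition in
/-- Theorem 3.3. -/
theorem statement13 (lam : StrictPartition) :
    D (fun nu => 1 / (H nu : ℚ)) lam = 0 ∧
    (∑ᶠ nu ∈ {nu : StrictPartition | lam.AddBox nu ∧ lam.length < nu.length},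
        1 / (H nu : ℚ)) +
      2 * (∑ᶠ nu ∈ {nu : StrictPartition | lam.AddBox nu ∧ nu.length = lam.length},
        1 / (H nu : ℚ)) = 1 / (H lam : ℚ) := by
  have hsum : (∑ᶠ nu ∈ {nu : StrictPartition | lam.AddBox nu ∧ lam.length < nu.length},
        1 / (H nu : ℚ)) +
      2 * (∑ᶠ nu ∈ {nu : StrictPartition | lam.AddBox nu ∧ nu.length = lam.length},
        1 / (H nu : ℚ)) = 1 / (H lam : ℚ) := by
    have hlen : ∀ r ∈ lam.addableRows,
        (lam.bump r).length = max lam.length r ∧ r ≤ lam.length + 1 :=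
      fun r hr => ⟨bump_length hr, (mem_addableRows.mp hr).1.2⟩
    have hnew : {r ∈ lam.addableRows | lam.length < (lam.bump r).length} =
        {r ∈ lam.addableRows | r = lam.length + 1} :=
      filter_congr fun r hr => by have := hlen r hr; omega
    have hold : {r ∈ lam.addableRows | (lam.bump r).length = lam.length} =
        {r ∈ lam.addableRows | ¬r = lam.length + 1} :=
      filter_congr fun r hr => by have := hlen r hr; omega
    rw [finsum_addBox lam (lam.length < ·), finsum_addBox lam (· = lam.length), hnew, hold,
      mul_sum, ← sum_ite, ← sum_congr rfl fun r hr => lagrangeTerm_div_H hr, ← sum_div,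
      sum_lagrangeTerm_addableRows]
  exact ⟨sub_eq_zero.mpr hsum, hsum⟩
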